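/- (Weighted energy lemma, Borchers–Miyakawa type) Let u : [0,∞) → L²_σ satisfy: ‖u(t)‖₂² + ∫_s^t ‖∇u(τ)‖₂² dτ ≤ ‖u(s)‖₂² for a.e. s ≥ 0 (including s = 0) and all t ≥ s. Suppose there exist g ∈ L¹_loc([0,∞)) with g ≥ 0 and m > 0 such that (m/(1+t)) ‖u(t)‖₂² ≤ g(t) + ‖∇u(t)‖₂² for a.e. t > 0. Then (1+t)^m ‖u(t)‖₂² ≤ ‖u(0)‖₂² + ∫_0^t (1+τ)^m g(τ) dτ for all t > 0. -/

import Mathlib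

open MeasureTheory Real Filter Set
open scoped ENNReal NNReal FourierTransform

noncomputable section

/-- Euclidean space `ℝ^n`. -/
abbrev Rn (n : ℕ) := EuclideanSpace ℝ (Fin n)

/-- Partial derivative `∂_k u_j` of a vector field. -/
def pd {n : ℕ} (u : Rn n → Rn n) (k j : Fin n) (x : Rn n) : ℝ :=
  fderiv ℝ u x (EuclideanSpace.single k 1) j

/-- Squared Frobenius norm of `∇u`. -/
def gradSq {n : ℕ} (u : Rn n → Rn n) (x : Rn n) : ℝ := ∑ k, ∑ j, (pd u k j x) ^ 2

/-- Distributional divergence-freeness: `∫ V · ∇φ = 0` for all test functions `φ`. -/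
def DivFree {n : ℕ} (V : Rn n → Rn n) : Prop :=
  ∀ φ : Rn n → ℝ, ContDiff ℝ (⊤ : ℕ∞) φ → HasCompactSupport φ →
    ∫ x, (inner ℝ (V x) (gradient φ x) : ℝ) = 0

/-- Membership in `H¹(ℝ^n)^n`. -/
def H1 {n : ℕ} (u : Rn n → Rn n) : Prop :=
  MemLp u 2 volume ∧ Differentiable ℝ u ∧ MemLp (fun x => fderiv ℝ u x) 2 volume

/-- The weak-`L^q` (Lorentz `L^{q,∞}`) quasinorm. -/
def wnorm' {n : ℕ} {E : Type*} [NormedAddCommGroup E] (q : ℝ) (f : Rn n → E) : ℝ≥0∞ :=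
  ⨆ s : ℝ≥0, (s : ℝ≥0∞) * (volume {x : Rn n | (s : ℝ) < ‖f x‖}) ^ (1 / q)

/-- The Lorentz `L^{q,1}` norm (via the distribution function). -/
def lnorm1 {n : ℕ} {E : Type*} [NormedAddCommGroup E] (q : ℝ) (f : Rn n → E) : ℝ≥0∞ :=
  ∫⁻ s in Ioi (0 : ℝ), (volume {x : Rn n | s < ‖f x‖}) ^ (1 / q)

/-- The Gaussian heat kernel on `ℝ^n`. -/
def G (n : ℕ) (t : ℝ) (x : Rn n) : ℝ :=
  (4 * π * t) ^ (-(n : ℝ) / 2) * Real.exp (-‖x‖ ^ 2 / (4 * t))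

/-- The heat semigroup `e^{tΔ} f`. -/
def heat {n : ℕ} {E : Type*} [NormedAddCommGroup E] [NormedSpace ℝ E] (t : ℝ)
    (f : Rn n → E) (x : Rn n) : E := ∫ y, G n t (x - y) • f y

/-- `∂_l G`. -/
def dG (n : ℕ) (t : ℝ) (l : Fin n) (x : Rn n) : ℝ :=
  fderiv ℝ (G n t) x (EuclideanSpace.single l 1)

/-- `∂_j ∂_k ∂_l G`. -/
def d3G (n : ℕ) (t : ℝ) (j k l : Fin n) (x : Rn n) : ℝ :=
  fderiv ℝ (fun y => fderiv ℝ (dG n t l) y (EuclideanSpace.single k 1)) x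
    (EuclideanSpace.single j 1)

/-- The kernel `Γ_{jkl}(x,t)` of the composite operator `e^{tΔ} P div`. -/
def Gam (n : ℕ) (t : ℝ) (j k l : Fin n) (x : Rn n) : ℝ :=
  (if j = k then dG n t l x else 0) + ∫ s in Ioi t, d3G n s j k l x

/-- The composite operator `e^{tΔ} P div` applied to a matrix field `F`. -/
def heatPdiv {n : ℕ} (t : ℝ) (F : Rn n → Fin n → Fin n → ℝ) (x : Rn n) : Rn n :=
  (WithLp.equiv 2 (Fin n → ℝ)).symm fun j => ∑ k, ∑ l, ∫ y, Gam n t j k l (x - y) * F y k l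

/-- The bilinear form `a(t; u, w)` with drift `Vt`. -/
def bform {n : ℕ} (Vt u w : Rn n → Rn n) : ℝ :=
  (∫ x, ∑ k, ∑ j, pd u k j x * pd w k j x)
  + (∫ x, ∑ j, ∑ k, Vt x k * pd u k j x * w x j)
  - (∫ x, ∑ j, ∑ k, Vt x j * u x k * pd w k j x)

/-- Squared norm of the (componentwise) Fourier transform. -/
def ftNormSq {n : ℕ} (u : Rn n → Rn n) (ξ : Rn n) : ℝ :=
  ∑ j, ‖𝓕 (fun x : Rn n => (u x j : ℂ)) ξ‖ ^ 2

/-- The matrix field `u ⊗ V + V ⊗ u`. -/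
def mix {n : ℕ} (u V : Rn n → Rn n) (y : Rn n) (k l : Fin n) : ℝ :=
  u y k * V y l + V y k * u y l

/-- Auxiliary real-analysis lemma. -/
theorem aux14 (E D g : ℝ → ℝ) (m : ℝ) (hm : 0 < m)
    (hE0 : ∀ τ, 0 ≤ E τ) (hg0 : ∀ τ, 0 ≤ g τ)
    (hgloc : ∀ r : ℝ, IntegrableOn g (Icc 0 r) volume)
    (hDloc : ∀ r : ℝ, IntegrableOn D (Icc 0 r) volume)
    (hSEI0 : ∀ r ≥ (0:ℝ), E r + (∫ τ in (0:ℝ)..r, D τ) ≤ E 0)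
    (hSEI : ∀ᵐ s ∂(volume.restrict (Ioi (0:ℝ))), ∀ r ≥ s,
      E r + (∫ τ in s..r, D τ) ≤ E s)
    (hsplit : ∀ᵐ τ ∂(volume.restrict (Ioi (0:ℝ))), (m / (1 + τ)) * E τ ≤ g τ + D τ)
    {t : ℝ} (ht : 0 < t) :
    (1 + t) ^ m * E t ≤ E 0 + ∫ τ in (0:ℝ)..t, (1 + τ) ^ m * g τ := by
  have ht0 : (0:ℝ) ≤ t := ht.le
  -- zero-extended versions of g and D
  set g1 : ℝ → ℝ := fun τ => if 0 ≤ τ then g τ else 0 with hg1def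
  set D1 : ℝ → ℝ := fun τ => if 0 ≤ τ then D τ else 0 with hD1def
  -- interval integrability of the extensions on every interval
  have hind : ∀ f : ℝ → ℝ, (∀ r : ℝ, IntegrableOn f (Icc 0 r) volume) →
      ∀ a b : ℝ, IntervalIntegrable (fun τ => if 0 ≤ τ then f τ else 0) volume a b := by
    intro f hf a b
    apply IntegrableOn.intervalIntegrable
    have h1 : (fun τ => if 0 ≤ τ then f τ else 0) = (Ici (0:ℝ)).indicator f := by
      funext τ; simp [Set.indicator_apply, Set.mem_Ici]
    rw [h1]
    unfold IntegrableOn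
    rw [integrable_indicator_iff measurableSet_Ici, IntegrableOn,
      Measure.restrict_restrict measurableSet_Ici]
    apply (hf (max a b)).mono_set
    rintro x ⟨hx0, hxu⟩
    refine ⟨hx0, ?_⟩
    rcases Set.mem_uIcc.mp hxu with h | h
    · exact le_max_of_le_right h.2
    · exact le_max_of_le_left h.2
  have hg1i : ∀ a b : ℝ, IntervalIntegrable g1 volume a b := hind g hgloc
  have hD1i : ∀ a b : ℝ, IntervalIntegrable D1 volume a b := hind D hDloc
  -- the extensions agree with the originals on nonnegative intervals
  have hcongr : ∀ (f : ℝ → ℝ) (a b : ℝ), 0 ≤ a → 0 ≤ b →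
      (∫ τ in a..b, (if 0 ≤ τ then f τ else 0)) = ∫ τ in a..b, f τ := by
    intro f a b ha hb
    apply intervalIntegral.integral_congr
    intro τ hτ
    have h0 : 0 ≤ τ := by
      rcases Set.mem_uIcc.mp hτ with h | h
      · exact ha.trans h.1
      · exact hb.trans h.1
    simp only [if_pos h0]
  -- auxiliary functions
  set KK : ℝ → ℝ := fun s => ∫ τ in s..t, g1 τ with hKK
  set II : ℝ → ℝ := fun s => ∫ τ in s..t, D1 τ with hII
  set PS : ℝ → ℝ := fun s => m / (1 + |s|) * (E t + II s) with hPS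
  set HH : ℝ → ℝ := fun s => ∫ τ in s..t, PS τ with hHH
  set WW : ℝ → ℝ := fun s => m * (1 ⊔ (1 + s)) ^ (m - 1) with hWW
  set PP : ℝ → ℝ := fun s => (1 + s) ^ m with hPP
  -- continuity facts
  have hKKcont : Continuous KK := by
    have e : KK = fun s => (∫ τ in (0:ℝ)..t, g1 τ) - ∫ τ in (0:ℝ)..s, g1 τ := by
      funext s
      rw [hKK, eq_sub_iff_add_eq, add_comm,
        intervalIntegral.integral_add_adjacent_intervals (hg1i 0 s) (hg1i s t)]
    rw [e]
    exact continuous_const.sub (intervalIntegral.continuous_primitive hg1i 0)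
  have hIIcont : Continuous II := by
    have e : II = fun s => (∫ τ in (0:ℝ)..t, D1 τ) - ∫ τ in (0:ℝ)..s, D1 τ := by
      funext s
      rw [hII, eq_sub_iff_add_eq, add_comm,
        intervalIntegral.integral_add_adjacent_intervals (hD1i 0 s) (hD1i s t)]
    rw [e]
    exact continuous_const.sub (intervalIntegral.continuous_primitive hD1i 0)
  have hPScont : Continuous PS := by
    simp only [hPS]
    exact (continuous_const.div (continuous_const.add continuous_abs)
      (fun s => (by positivity : (0:ℝ) < 1 + |s|).ne')).mul (continuous_const.add hIIcont)
  have hHHderiv : ∀ s : ℝ, HasDerivAt HH (-PS s) s := by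
    intro s
    simp only [hHH]
    exact intervalIntegral.integral_hasDerivAt_left (hPScont.intervalIntegrable s t)
      (hPScont.stronglyMeasurableAtFilter volume (nhds s)) hPScont.continuousAt
  have hHHcont : Continuous HH :=
    continuous_iff_continuousAt.mpr fun s => (hHHderiv s).continuousAt
  have hWWcont : Continuous WW := by
    simp only [hWW]
    apply continuous_const.mul
    apply Continuous.rpow_const (continuous_const.max (continuous_const.add continuous_id))
    intro x
    left
    have h1 : (1:ℝ) ≤ 1 ⊔ (1 + x) := le_max_left _ _
    intro hx
    simp only [Pi.add_apply, id_eq] at hx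
    linarith
  -- derivative of the weight
  have hPPderiv : ∀ s ∈ Icc (0:ℝ) t, HasDerivAt PP (WW s) s := by
    intro s hs
    have h1s : (0:ℝ) < 1 + s := by linarith [hs.1]
    have hd : HasDerivAt (fun x : ℝ => 1 + x) 1 s := (hasDerivAt_id s).const_add 1
    have h2 : HasDerivAt (fun x : ℝ => (1 + x) ^ m) (1 * m * (1 + s) ^ (m - 1)) s :=
      hd.rpow_const (Or.inl h1s.ne')
    simp only [hPP, hWW]
    convert h2 using 1
    rw [sup_eq_right.mpr (by linarith [hs.1] : (1:ℝ) ≤ 1 + s)]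
    ring
  have hWWnn : ∀ s : ℝ, 0 ≤ WW s := by
    intro s
    simp only [hWW]
    have h1 : (0:ℝ) ≤ 1 ⊔ (1 + s) := le_trans zero_le_one (le_max_left _ _)
    exact mul_nonneg hm.le (Real.rpow_nonneg h1 _)
  -- the main comparison : HH s ≤ KK s + II s  on [0, t]
  have hcomp : ∀ s ∈ Icc (0:ℝ) t, HH s ≤ KK s + II s := by
    intro s hs
    have hst : s ≤ t := hs.2
    simp only [hHH, hKK, hII]
    rw [
      ← intervalIntegral.integral_add (hg1i s t) (hD1i s t),
      intervalIntegral.integral_of_le hst, intervalIntegral.integral_of_le hst]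
    have hsub : Ioc s t ⊆ Ioi (0:ℝ) := fun x hx => lt_of_le_of_lt hs.1 hx.1
    apply setIntegral_mono_ae_restrict (hPScont.intervalIntegrable s t).1
      ((hg1i s t).add (hD1i s t)).1
    have H1 := ae_restrict_of_ae_restrict_of_subset hsub hSEI
    have H2 := ae_restrict_of_ae_restrict_of_subset hsub hsplit
    have H3 : ∀ᵐ τ ∂(volume.restrict (Ioc s t)), τ ∈ Ioc s t :=
      ae_restrict_mem measurableSet_Ioc
    filter_upwards [H1, H2, H3] with τ h1 h2 hτ
    have hτ0 : 0 < τ := lt_of_le_of_lt hs.1 hτ.1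
    have hIIeq : II τ = ∫ σ in τ..t, D σ := by simp only [hII]; exact hcongr D τ t hτ0.le ht0
    have hEineq : E t + II τ ≤ E τ := by rw [hIIeq]; exact h1 t hτ.2
    have hfac : 0 ≤ m / (1 + τ) := by positivity
    calc PS τ = m / (1 + τ) * (E t + II τ) := by
          simp only [hPS]; rw [abs_of_nonneg hτ0.le]
      _ ≤ m / (1 + τ) * E τ := mul_le_mul_of_nonneg_left hEineq hfac
      _ ≤ g τ + D τ := h2
      _ = g1 τ + D1 τ := by rw [hg1def, hD1def]; simp [if_pos hτ0.le]
  -- the derivative of F := PP * HH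
  set FF' : ℝ → ℝ := fun s => WW s * (HH s - (E t + II s)) with hFF'
  have hFF'cont : Continuous FF' := by
    exact hWWcont.mul (hHHcont.sub (continuous_const.add hIIcont))
  have hFFderiv : ∀ s ∈ Icc (0:ℝ) t, HasDerivAt (fun x => PP x * HH x) (FF' s) s := by
    intro s hs
    have h1s : (0:ℝ) < 1 + s := by linarith [hs.1]
    have key : PP s * PS s = WW s * (E t + II s) := by
      simp only [hPP, hPS, hWW]
      rw [ abs_of_nonneg hs.1,
        sup_eq_right.mpr (by linarith [hs.1] : (1:ℝ) ≤ 1 + s),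
        Real.rpow_sub h1s, Real.rpow_one]
      field_simp
    have h2 : HasDerivAt (fun x => PP x * HH x) _ s := (hPPderiv s hs).mul (hHHderiv s)
    convert h2 using 1
    show WW s * (HH s - (E t + II s)) = _
    rw [mul_sub, ← key]
    ring
  -- FTC for F on [0, t]
  have hFTC : ∫ s in (0:ℝ)..t, FF' s = PP t * HH t - PP 0 * HH 0 := by
    apply intervalIntegral.integral_eq_sub_of_hasDerivAt
    · intro s hs
      rw [Set.uIcc_of_le ht0] at hs
      exact hFFderiv s hs
    · exact hFF'cont.intervalIntegrable 0 t
  have hHHt : HH t = 0 := by simp only [hHH]; exact intervalIntegral.integral_same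
  have hPP0 : PP 0 = 1 := by simp only [hPP]; norm_num
  -- pointwise bound for FF'
  have hFF'le : ∀ s ∈ Icc (0:ℝ) t, FF' s ≤ WW s * (KK s - E t) := by
    intro s hs
    have h1 := hcomp s hs
    have h2 : HH s - (E t + II s) ≤ KK s - E t := by linarith
    simp only [hFF']
    exact mul_le_mul_of_nonneg_left h2 (hWWnn s)
  have hbnd : -(HH 0) ≤ ∫ s in (0:ℝ)..t, WW s * (KK s - E t) := by
    have h1 : ∫ s in (0:ℝ)..t, FF' s ≤ ∫ s in (0:ℝ)..t, WW s * (KK s - E t) :=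
      intervalIntegral.integral_mono_on ht0 (hFF'cont.intervalIntegrable 0 t)
        ((hWWcont.mul (hKKcont.sub continuous_const)).intervalIntegrable 0 t) hFF'le
    rw [hFTC, hHHt, hPP0, mul_zero, one_mul] at h1
    linarith
  -- split the right-hand integral
  have hsplitInt : ∫ s in (0:ℝ)..t, WW s * (KK s - E t)
      = (∫ s in (0:ℝ)..t, WW s * KK s) - (∫ s in (0:ℝ)..t, WW s) * E t := by
    have e : (fun s => WW s * (KK s - E t)) = fun s => WW s * KK s - WW s * E t := by
      funext s; ring
    rw [e, intervalIntegral.integral_sub (f := fun s => WW s * KK s) (g := fun s => WW s * E t)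
      ((hWWcont.mul hKKcont).intervalIntegrable 0 t)
      ((hWWcont.mul continuous_const).intervalIntegrable 0 t),
      intervalIntegral.integral_mul_const]
  have hWWint : ∫ s in (0:ℝ)..t, WW s = PP t - PP 0 := by
    apply intervalIntegral.integral_eq_sub_of_hasDerivAt
    · intro s hs
      rw [Set.uIcc_of_le ht0] at hs
      exact hPPderiv s hs
    · exact hWWcont.intervalIntegrable 0 t
  -- Fubini
  have hFub : ∫ s in (0:ℝ)..t, WW s * KK s = ∫ τ in (0:ℝ)..t, (PP τ - 1) * g1 τ := by
    set Φ : ℝ × ℝ → ℝ :=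
      ({p : ℝ × ℝ | p.1 < p.2}).indicator (fun p => WW p.1 * g1 p.2) with hΦ
    have hΦint : Integrable Φ
        ((volume.restrict (Ioc (0:ℝ) t)).prod (volume.restrict (Ioc (0:ℝ) t))) := by
      have hwm : AEStronglyMeasurable WW (volume.restrict (Ioc (0:ℝ) t)) :=
        hWWcont.aestronglyMeasurable.restrict
      have hg1m : AEStronglyMeasurable g1 (volume.restrict (Ioc (0:ℝ) t)) :=
        (hg1i 0 t).1.aestronglyMeasurable
      have hΦm : AEStronglyMeasurable Φ
          ((volume.restrict (Ioc (0:ℝ) t)).prod (volume.restrict (Ioc (0:ℝ) t))) := by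
        simp only [hΦ]
        apply AEStronglyMeasurable.indicator _ (measurableSet_lt measurable_fst measurable_snd)
        exact (hwm.comp_quasiMeasurePreserving
            (Measure.quasiMeasurePreserving_fst)).mul
          (hg1m.comp_quasiMeasurePreserving (Measure.quasiMeasurePreserving_snd))
      set B : ℝ := (1 + t) ^ (m - 1) ⊔ 1 with hB
      have hWB : ∀ s ∈ Ioc (0:ℝ) t, WW s ≤ m * B := by
        intro s hs
        simp only [hWW]
        rw [sup_eq_right.mpr (by linarith [hs.1.le] : (1:ℝ) ≤ 1 + s)]
        apply mul_le_mul_of_nonneg_left _ hm.le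
        rcases le_or_gt 1 m with hm1 | hm1
        · refine le_trans ?_ (le_max_left _ _)
          exact Real.rpow_le_rpow (by linarith [hs.1.le]) (by linarith [hs.2]) (by linarith)
        · refine le_trans ?_ (le_max_right _ _)
          exact Real.rpow_le_one_of_one_le_of_nonpos (by linarith [hs.1.le]) (by linarith)
      have hmaj : Integrable (fun p : ℝ × ℝ => (m * B) * |g1 p.2|)
          ((volume.restrict (Ioc (0:ℝ) t)).prod (volume.restrict (Ioc (0:ℝ) t))) := by
        apply Integrable.const_mul
        have h1 : Integrable (fun _ : ℝ => (1:ℝ)) (volume.restrict (Ioc (0:ℝ) t)) := by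
          rw [← IntegrableOn]
          exact integrableOn_const measure_Ioc_lt_top.ne
        have h2 : Integrable (fun τ => |g1 τ|) (volume.restrict (Ioc (0:ℝ) t)) :=
          (hg1i 0 t).1.abs
        have h3 := Integrable.mul_prod h1 h2
        simpa using h3
      apply Integrable.mono' hmaj hΦm
      rw [Measure.prod_restrict]
      refine (ae_restrict_mem (measurableSet_Ioc.prod measurableSet_Ioc)).mono ?_
      rintro ⟨s, τ⟩ ⟨hs, hτ⟩
      calc ‖Φ (s, τ)‖ ≤ ‖WW s * g1 τ‖ := by simp only [hΦ]; exact norm_indicator_le_norm_self _ _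
        _ = |WW s| * |g1 τ| := by rw [norm_mul]; rfl
        _ ≤ (m * B) * |g1 τ| := by
            apply mul_le_mul_of_nonneg_right _ (abs_nonneg _)
            rw [abs_of_nonneg (hWWnn s)]
            exact hWB s hs
    have e1 : ∀ s ∈ Ioc (0:ℝ) t, WW s * KK s = ∫ τ in Ioc (0:ℝ) t, Φ (s, τ) := by
      intro s hs
      have e0 : ∀ τ, Φ (s, τ) = (Ioi s).indicator (fun τ => WW s * g1 τ) τ := by
        intro τ
        simp only [hΦ]
        simp only [Set.indicator_apply, Set.mem_setOf_eq, Set.mem_Ioi]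
      simp only [e0]
      simp only [hKK]
      rw [setIntegral_indicator measurableSet_Ioi, Set.Ioc_inter_Ioi,
        sup_eq_right.mpr hs.1.le, MeasureTheory.integral_const_mul,
        intervalIntegral.integral_of_le hs.2]
    have e2 : ∀ τ ∈ Ioc (0:ℝ) t, (∫ s in Ioc (0:ℝ) t, Φ (s, τ)) = (PP τ - 1) * g1 τ := by
      intro τ hτ
      have e0 : ∀ s, Φ (s, τ) = (Iio τ).indicator (fun s => WW s * g1 τ) s := by
        intro s
        simp only [hΦ]
        simp only [Set.indicator_apply, Set.mem_setOf_eq, Set.mem_Iio]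
      simp only [e0]
      rw [setIntegral_indicator measurableSet_Iio]
      have hset : Ioc (0:ℝ) t ∩ Iio τ = Ioo 0 τ := by
        ext x
        simp only [Set.mem_inter_iff, Set.mem_Ioc, Set.mem_Iio, Set.mem_Ioo]
        constructor
        · rintro ⟨⟨h1, _⟩, h3⟩; exact ⟨h1, h3⟩
        · rintro ⟨h1, h2⟩; exact ⟨⟨h1, h2.le.trans hτ.2⟩, h2⟩
      rw [hset, ← integral_Ioc_eq_integral_Ioo, MeasureTheory.integral_mul_const]
      have hWτ : ∫ s in Ioc (0:ℝ) τ, WW s = PP τ - 1 := by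
        rw [← intervalIntegral.integral_of_le hτ.1.le, ← hPP0]
        apply intervalIntegral.integral_eq_sub_of_hasDerivAt
        · intro s hs
          rw [Set.uIcc_of_le hτ.1.le] at hs
          exact hPPderiv s ⟨hs.1, hs.2.trans hτ.2⟩
        · exact hWWcont.intervalIntegrable 0 τ
      rw [hWτ]
    have hΦint' : Integrable (Function.uncurry fun s τ => Φ (s, τ))
        ((volume.restrict (Ioc (0:ℝ) t)).prod (volume.restrict (Ioc (0:ℝ) t))) := hΦint
    rw [intervalIntegral.integral_of_le ht0, intervalIntegral.integral_of_le ht0,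
      setIntegral_congr_fun measurableSet_Ioc e1,
      MeasureTheory.integral_integral_swap hΦint',
      setIntegral_congr_fun measurableSet_Ioc e2]
  -- rewrite the Fubini result with g instead of g1
  have hgint : IntervalIntegrable g volume 0 t := by
    apply IntegrableOn.intervalIntegrable
    rw [Set.uIcc_of_le ht0]
    exact hgloc t
  have hPPcont : ContinuousOn PP (Set.uIcc (0:ℝ) t) := by
    rw [Set.uIcc_of_le ht0]
    intro x hx
    apply ContinuousAt.continuousWithinAt
    simp only [hPP]
    exact ContinuousAt.comp
      (Real.continuousAt_rpow_const _ _ (Or.inl (by linarith [hx.1] : (1:ℝ) + x ≠ 0)))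
      (continuousAt_const.add continuousAt_id)
  have hPgint : IntervalIntegrable (fun τ => PP τ * g τ) volume 0 t :=
    hgint.continuousOn_mul hPPcont
  have hFubg : ∫ τ in (0:ℝ)..t, (PP τ - 1) * g1 τ
      = (∫ τ in (0:ℝ)..t, PP τ * g τ) - ∫ τ in (0:ℝ)..t, g τ := by
    have e : ∫ τ in (0:ℝ)..t, (PP τ - 1) * g1 τ = ∫ τ in (0:ℝ)..t, (PP τ - 1) * g τ := by
      apply intervalIntegral.integral_congr
      intro τ hτ
      rw [Set.uIcc_of_le ht0] at hτ
      simp only [hg1def]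
      simp only [if_pos hτ.1]
    rw [e]
    have e2 : (fun τ => (PP τ - 1) * g τ) = fun τ => PP τ * g τ - g τ := by
      funext τ; ring
    rw [e2, intervalIntegral.integral_sub hPgint hgint]
  -- final assembly
  have hKK0 : KK 0 = ∫ τ in (0:ℝ)..t, g τ := by simp only [hKK]; exact hcongr g 0 t le_rfl ht0
  have hII0 : II 0 = ∫ τ in (0:ℝ)..t, D τ := by simp only [hII]; exact hcongr D 0 t le_rfl ht0
  have hHH0 : HH 0 ≤ (∫ τ in (0:ℝ)..t, g τ) + ∫ τ in (0:ℝ)..t, D τ := by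
    have := hcomp 0 ⟨le_rfl, ht0⟩
    rw [hKK0, hII0] at this
    exact this
  have hEn : E t + (∫ τ in (0:ℝ)..t, D τ) ≤ E 0 := hSEI0 t ht0
  have hPPt : PP t = (1 + t) ^ m := by simp only [hPP]
  have hPg : ∫ τ in (0:ℝ)..t, PP τ * g τ = ∫ τ in (0:ℝ)..t, (1 + τ) ^ m * g τ := by
    apply intervalIntegral.integral_congr
    intro τ _
    simp only [hPP]
  have hexp : (PP t - PP 0) * E t = PP t * E t - E t := by rw [hPP0]; ring
  rw [hsplitInt, hWWint, hFub, hFubg, hPg] at hbnd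
  have hEtnn := hE0 t
  rw [← hPPt]
  linarith

/-- weighted energy lemma of Borchers–Miyakawa type. -/
theorem statement14 (n : ℕ) (u : ℝ → Rn n → Rn n) (g : ℝ → ℝ) (m : ℝ) (hm : 0 < m)
    (hg0 : ∀ t, 0 ≤ g t)
    (hgloc : ∀ t : ℝ, IntegrableOn g (Icc 0 t) volume)
    (hDloc : ∀ t : ℝ, IntegrableOn (fun τ => ∫ x, gradSq (u τ) x) (Icc 0 t) volume)
    (hSEI0 : ∀ t ≥ (0:ℝ),
      (∫ x, ‖u t x‖ ^ 2) + (∫ τ in (0:ℝ)..t, ∫ x, gradSq (u τ) x) ≤ ∫ x, ‖u 0 x‖ ^ 2)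
    (hSEI : ∀ᵐ s ∂(volume.restrict (Ioi (0:ℝ))), ∀ t ≥ s,
      (∫ x, ‖u t x‖ ^ 2) + (∫ τ in s..t, ∫ x, gradSq (u τ) x) ≤ ∫ x, ‖u s x‖ ^ 2)
    (hsplit : ∀ᵐ t ∂(volume.restrict (Ioi (0:ℝ))),
      (m / (1 + t)) * ∫ x, ‖u t x‖ ^ 2 ≤ g t + ∫ x, gradSq (u t) x) :
    ∀ t > (0:ℝ), (1 + t) ^ m * ∫ x, ‖u t x‖ ^ 2 ≤
      (∫ x, ‖u 0 x‖ ^ 2) + ∫ τ in (0:ℝ)..t, (1 + τ) ^ m * g τ := by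
  
  intro t ht
  have hE0 : ∀ τ : ℝ, 0 ≤ ∫ x, ‖u τ x‖ ^ 2 := fun τ =>
    integral_nonneg fun x => by positivity
  exact aux14 (fun τ => ∫ x, ‖u τ x‖ ^ 2) (fun τ => ∫ x, gradSq (u τ) x) g m hm hE0 hg0
    hgloc hDloc hSEI0 hSEI hsplit ht
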